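/- arXiv:2309.12607 — 2 statements merged into one kernel-verified Lean document; each statement's English description precedes it below -/
import Mathlib

section
/- For every α ∈ (0,1) there exist ε > 0 and n₀ such that for all n ≥ n₀ the following holds. If G is a graph on n vertices that is not α-extremal and has minimum degree at least (1/2 − ε)n, then for every pair of half-sets A and B one has e_G(A, B) ≥ (α/3) n², where e_G(A, B) denotes the number of edges of G with one endpoint in A and the other in B. -/
/-!
Write `X = A ∩ B`, `P = A \ B`, `R = (A ∪ B)ᶜ` and suppose `m = e(A, B) < αn²/3`; half-sets give
`|X| + |P| ≤ (n + 1)/2` and `|R| ≤ |X| + 1`. An edge inside `A` that meets `B` is counted by `m`,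
so `e(P) ≥ e(A) - m > αn² - m` and `P` is large. An edge leaving `A` ends in `B` or in `R`, so
`|A||R| > αn² - m` and `X` is large. Finally the vertices of `X` have degree about `n/2`, and their
edges stay in `A ∪ B` (where they are counted by `m`, those inside `X` twice) or go to `R`, so
`|X|(n/2 - |X|) ≲ m + e(X)` with `e(X) ≤ min(m, |X|²/2)`. These three constraints on `|X|/n` are
incompatible.
-/

open Finset
open scoped Classical

namespace RobustDirac

/-- A Dirac graph: minimum degree at least `n/2`. -/
def IsDirac {n : ℕ} (G : SimpleGraph (Fin n)) : Prop :=
  ∀ v, (n : ℝ) / 2 ≤ ((G.neighborSet v).ncard : ℝ)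

/-- Number of edges of `G` with both endpoints in `A`. -/
noncomputable def eIn {V : Type*} (G : SimpleGraph V) (A : Set V) : ℕ :=
  {e ∈ G.edgeSet | ∀ v ∈ e, v ∈ A}.ncard

/-- Number of edges of `G` with one endpoint in `A` and the other in `B`. -/
noncomputable def eBetween {V : Type*} (G : SimpleGraph V) (A B : Set V) : ℕ :=
  {e ∈ G.edgeSet | ∃ u v, e = s(u, v) ∧ u ∈ A ∧ v ∈ B}.ncard

/-- A half-set of an `n`-element vertex set. -/
def IsHalfSet {n : ℕ} (A : Finset (Fin n)) : Prop :=
  ((n : ℝ) - 1) / 2 ≤ (A.card : ℝ) ∧ (A.card : ℝ) ≤ ((n : ℝ) + 1) / 2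

/-- `e_C(𝔾, A)`. -/
noncomputable def eColored {n : ℕ} (𝔾 : Fin n → SimpleGraph (Fin n))
    (C : Finset (Fin n)) (A : Finset (Fin n)) : ℕ :=
  ∑ i ∈ C, (eIn (𝔾 i) ↑A + eIn (𝔾 i) (↑A)ᶜ) + ∑ i ∈ Cᶜ, eBetween (𝔾 i) ↑A (↑A)ᶜ

/-- `r(𝔾)`: minimum of `e_C(𝔾, A)` over half-sets `A` and odd-size color sets `C`. -/
noncomputable def rFam {n : ℕ} (𝔾 : Fin n → SimpleGraph (Fin n)) : ℕ :=
  sInf {k | ∃ A C : Finset (Fin n), IsHalfSet A ∧ Odd C.card ∧ k = eColored 𝔾 C A}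

/-- An exceptional family. -/
def IsExceptional {n : ℕ} (𝔾 : Fin n → SimpleGraph (Fin n)) : Prop :=
  ∃ A C : Finset (Fin n), IsHalfSet A ∧ Odd C.card ∧
    (eColored 𝔾 C A : ℝ) ≤ 0.1 * (n : ℝ) ^ 2

/-- A Hamilton `𝔾`-transversal, identified with its set of colored edges. -/
def IsHamTransversal {n : ℕ} (𝔾 : Fin n → SimpleGraph (Fin n))
    (T : Finset (Sym2 (Fin n) × Fin n)) : Prop :=
  T.card = n ∧ T.image Prod.snd = Finset.univ ∧
    (∀ x ∈ T, x.1 ∈ (𝔾 x.2).edgeSet) ∧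
    ∃ (v : Fin n) (w : (⊤ : SimpleGraph (Fin n)).Walk v v),
      w.IsHamiltonianCycle ∧ w.edges.toFinset = T.image Prod.fst

/-- Probability of event `E` when each coordinate of `ι` is `true`
independently with probability `p`. -/
noncomputable def prEvent {ι : Type*} [Fintype ι] [DecidableEq ι] (p : ℝ)
    (E : (ι → Bool) → Prop) : ℝ :=
  ∑ f : ι → Bool, if E f then (∏ i, if f i then p else 1 - p) else 0

/-- A `q`-spread probability measure supported on the subsets of `Z` satisfying `P`. -/
def IsSpreadMeasure {Z : Type*} [Fintype Z] [DecidableEq Z] (q : ℝ)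
    (P : Finset Z → Prop) (μ : Finset Z → ℝ) : Prop :=
  (∀ T, 0 ≤ μ T) ∧ (∀ T, μ T ≠ 0 → P T) ∧ (∑ T : Finset Z, μ T = 1) ∧
    ∀ S : Finset Z, (∑ T ∈ Finset.univ.filter (fun T => S ⊆ T), μ T) ≤ q ^ S.card


/-- A graph on `[n]` is `α`-extremal if some half-set `A` satisfies
`min{e(A), e(A, Ā)} ≤ α n²`. -/
def GraphExtremal {n : ℕ} (α : ℝ) (G : SimpleGraph (Fin n)) : Prop :=
  ∃ A : Finset (Fin n), IsHalfSet A ∧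
    ((min (eIn G ↑A) (eBetween G ↑A (↑A)ᶜ) : ℕ) : ℝ) ≤ α * (n : ℝ) ^ 2

section EdgeCounts

variable {V : Type*} (G : SimpleGraph V)

theorem eIn_eq_eBetween (S : Set V) : eIn G S = eBetween G S S := by
  unfold eIn eBetween
  congr 1
  ext e
  induction e using Sym2.ind with
  | _ u v =>
    simp only [Set.mem_ofPred_eq, Sym2.mem_iff, forall_eq_or_imp, forall_eq, Sym2.eq_iff]
    refine and_congr_right fun _ => ⟨fun h => ⟨u, v, Or.inl ⟨rfl, rfl⟩, h⟩, ?_⟩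
    rintro ⟨a, b, (⟨rfl, rfl⟩ | ⟨rfl, rfl⟩), ha, hb⟩
    exacts [⟨ha, hb⟩, ⟨hb, ha⟩]

variable [Finite V]

theorem eBetween_mono {S S' T T' : Set V} (hS : S ⊆ S') (hT : T ⊆ T') :
    eBetween G S T ≤ eBetween G S' T' :=
  Set.ncard_le_ncard fun _ ⟨he, u, v, huv, hu, hv⟩ => ⟨he, u, v, huv, hS hu, hT hv⟩

theorem eBetween_union_right_le (S T T' : Set V) :
    eBetween G S (T ∪ T') ≤ eBetween G S T + eBetween G S T' := by
  refine (Set.ncard_le_ncard ?_).trans (Set.ncard_union_le _ _)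
  rintro _ ⟨he, u, v, rfl, hu, hv | hv⟩
  exacts [Or.inl ⟨he, u, v, rfl, hu, hv⟩, Or.inr ⟨he, u, v, rfl, hu, hv⟩]

theorem eIn_inter_le_eBetween (A B : Set V) : eIn G (A ∩ B) ≤ eBetween G A B := by
  rw [eIn_eq_eBetween]
  exact eBetween_mono G Set.inter_subset_left Set.inter_subset_right

theorem eBetween_inter_union_le (A B : Set V) :
    eBetween G (A ∩ B) (A ∪ B) ≤ eBetween G A B := by
  refine Set.ncard_le_ncard ?_
  rintro _ ⟨he, u, v, rfl, hu, hv | hv⟩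
  exacts [⟨he, v, u, Sym2.eq_swap, hv, hu.2⟩, ⟨he, u, v, rfl, hu.1, hv⟩]

theorem eIn_le_eBetween_add_eIn_diff (A B : Set V) :
    eIn G A ≤ eBetween G A B + eIn G (A \ B) := by
  simp only [eIn_eq_eBetween]
  refine (Set.ncard_le_ncard ?_).trans (Set.ncard_union_le _ _)
  rintro _ ⟨he, u, v, rfl, hu, hv⟩
  by_cases hvB : v ∈ B
  · exact Or.inl ⟨he, u, v, rfl, hu, hvB⟩
  by_cases huB : u ∈ B
  · exact Or.inl ⟨he, v, u, Sym2.eq_swap, hv, huB⟩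
  · exact Or.inr ⟨he, u, v, rfl, ⟨hu, huB⟩, ⟨hv, hvB⟩⟩

theorem eBetween_compl_le (A B : Set V) :
    eBetween G A Aᶜ ≤ eBetween G A B + eBetween G A (A ∪ B)ᶜ :=
  (eBetween_mono G le_rfl fun v hv => by by_cases hvB : v ∈ B <;> simp_all).trans
    (eBetween_union_right_le G A B _)

theorem eIn_add_eBetween_le_of_disjoint {S T : Set V} (h : Disjoint S T) :
    eIn G S + eBetween G S T ≤ eBetween G S (S ∪ T) := by
  rw [eIn_eq_eBetween, eBetween, eBetween, ← Set.ncard_union_eq]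
  · refine Set.ncard_le_ncard (Set.union_subset ?_ ?_) <;> rintro _ ⟨he, u, v, rfl, hu, hv⟩
    exacts [⟨he, u, v, rfl, hu, Or.inl hv⟩, ⟨he, u, v, rfl, hu, Or.inr hv⟩]
  rw [Set.disjoint_left]
  rintro _ ⟨-, u, v, rfl, hu, hv⟩ ⟨-, a, b, hab, -, hb⟩
  rcases Sym2.eq_iff.mp hab with ⟨-, rfl⟩ | ⟨rfl, -⟩
  exacts [h.ne_of_mem hv hb rfl, h.ne_of_mem hu hb rfl]

end EdgeCounts

section OrderedPairs

variable {V : Type*} [DecidableEq V] (G : SimpleGraph V) [DecidableRel G.Adj]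

theorem eBetween_eq_card_image (S T : Finset V) :
    eBetween G S T = #((G.interedges S T).image fun p => s(p.1, p.2)) := by
  rw [eBetween, ← Set.ncard_coe_finset, coe_image]
  congr 1
  ext e
  simp only [Set.mem_image, mem_coe, SimpleGraph.mem_interedges_iff, Prod.exists]
  constructor
  · rintro ⟨he, u, v, rfl, hu, hv⟩
    exact ⟨u, v, ⟨hu, hv, he⟩, rfl⟩
  · rintro ⟨u, v, ⟨hu, hv, he⟩, rfl⟩
    exact ⟨he, u, v, rfl, hu, hv⟩

theorem eBetween_le_card_mul (S T : Finset V) : eBetween G S T ≤ #S * #T := by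
  rw [eBetween_eq_card_image]
  exact card_image_le.trans (G.card_interedges_le_mul S T)

theorem eBetween_eq_card_interedges {S T : Finset V} (h : Disjoint S T) :
    eBetween G S T = #(G.interedges S T) := by
  rw [eBetween_eq_card_image, card_image_of_injOn]
  rintro ⟨a, b⟩ hab ⟨c, d⟩ hcd heq
  simp only [mem_coe, SimpleGraph.mem_interedges_iff] at hab hcd
  rcases Sym2.eq_iff.mp heq with ⟨rfl, rfl⟩ | ⟨rfl, -⟩
  · rfl
  · exact absurd hcd.2.1 (disjoint_left.mp h hab.1)

theorem card_interedges_self (S : Finset V) : #(G.interedges S S) = 2 * eIn G S := by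
  rw [eIn_eq_eBetween, eBetween_eq_card_image, card_eq_sum_card_image (fun p => s(p.1, p.2)),
    mul_comm, ← smul_eq_mul, ← sum_const]
  refine sum_congr rfl fun e he => ?_
  obtain ⟨⟨u, v⟩, huv, rfl⟩ := mem_image.mp he
  rw [SimpleGraph.mem_interedges_iff] at huv
  have hfib : {x ∈ G.interedges S S | s(x.1, x.2) = s(u, v)} = {(u, v), (v, u)} := by
    ext ⟨a, b⟩
    simp only [mem_filter, SimpleGraph.mem_interedges_iff, Sym2.eq_iff, mem_insert,
      mem_singleton, Prod.mk.injEq]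
    constructor
    · exact fun h => h.2
    · rintro (⟨rfl, rfl⟩ | ⟨rfl, rfl⟩)
      exacts [⟨huv, Or.inl ⟨rfl, rfl⟩⟩, ⟨⟨huv.2.1, huv.1, huv.2.2.symm⟩, Or.inr ⟨rfl, rfl⟩⟩]
  rw [hfib, card_pair]
  simpa using fun h _ => G.ne_of_adj huv.2.2 h

theorem two_mul_eIn_le_sq (S : Finset V) : 2 * eIn G S ≤ #S ^ 2 := by
  rw [← card_interedges_self, sq]
  exact G.card_interedges_le_mul S S

theorem card_interedges_union_of_disjoint (S : Finset V) {T T' : Finset V} (h : Disjoint T T') :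
    #(G.interedges S (T ∪ T')) = #(G.interedges S T) + #(G.interedges S T') := by
  rw [← card_union_of_disjoint (G.interedges_disjoint_right S h)]
  congr 1
  ext
  simp only [SimpleGraph.mem_interedges_iff, mem_union]
  tauto

theorem card_interedges_le_eBetween_add_eIn [Finite V] {S U : Finset V} (h : S ⊆ U) :
    #(G.interedges S U) ≤ eBetween G S U + eIn G S := by
  have hdisj : Disjoint S (U \ S) := disjoint_sdiff
  have hcover := eIn_add_eBetween_le_of_disjoint G (disjoint_coe.mpr hdisj)
  rw [← coe_union, union_sdiff_of_subset h] at hcover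
  calc #(G.interedges S U) = #(G.interedges S (S ∪ U \ S)) := by rw [union_sdiff_of_subset h]
    _ = 2 * eIn G S + eBetween G S ↑(U \ S) := by
      rw [card_interedges_union_of_disjoint G S hdisj, card_interedges_self,
        eBetween_eq_card_interedges G hdisj]
    _ ≤ eBetween G S U + eIn G S := by lia

theorem sum_ncard_neighborSet_eq_card_interedges [Fintype V] (S : Finset V) :
    ∑ v ∈ S, (G.neighborSet v).ncard = #(G.interedges S univ) := by
  rw [SimpleGraph.interedges, Rel.interedges_eq_biUnion, card_biUnion]
  · refine sum_congr rfl fun v _ => ?_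
    rw [card_map, ← Set.ncard_coe_finset, coe_filter]
    simp [SimpleGraph.neighborSet]
  · intro v _ w _ hvw
    simp only [disjoint_left, mem_map, Function.Embedding.coeFn_mk]
    rintro _ ⟨_, _, rfl⟩ ⟨_, _, h⟩
    exact hvw (Prod.ext_iff.mp h).1.symm

theorem sum_ncard_neighborSet_le [Fintype V] (S U : Finset V) :
    ∑ v ∈ S, (G.neighborSet v).ncard ≤ #(G.interedges S U) + #S * #Uᶜ := by
  rw [sum_ncard_neighborSet_eq_card_interedges, ← union_compl U,
    card_interedges_union_of_disjoint G S disjoint_compl_right]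
  exact Nat.add_le_add_left (G.card_interedges_le_mul S Uᶜ) _

theorem eBetween_compl_le_add_card_mul [Fintype V] (A B : Finset V) :
    eBetween G A (A : Set V)ᶜ ≤ eBetween G A B + #A * #(A ∪ B)ᶜ := by
  calc eBetween G A (A : Set V)ᶜ ≤ eBetween G A B + eBetween G A ↑(A ∪ B)ᶜ := by
        simpa only [coe_compl, coe_union] using eBetween_compl_le G A B
    _ ≤ _ := Nat.add_le_add_left (eBetween_le_card_mul G A _) _

theorem sum_ncard_neighborSet_inter_le [Fintype V] (A B : Finset V) :
    ∑ v ∈ A ∩ B, (G.neighborSet v).ncard ≤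
      eBetween G A B + eIn G ↑(A ∩ B) + #(A ∩ B) * #(A ∪ B)ᶜ := by
  have hpairs := card_interedges_le_eBetween_add_eIn G (inter_subset_union (s := A) (t := B))
  have hcross := eBetween_inter_union_le G A B
  rw [← coe_inter, ← coe_union] at hcross
  have := sum_ncard_neighborSet_le G (A ∩ B) (A ∪ B)
  lia

end OrderedPairs

theorem IsHalfSet.card_compl_union_le {n : ℕ} {A B : Finset (Fin n)} (hA : IsHalfSet A)
    (hB : IsHalfSet B) : #(A ∪ B)ᶜ ≤ #(A ∩ B) + 1 := by
  have hsum : n ≤ #A + #B + 1 := by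
    have := hA.1
    have := hB.1
    exact_mod_cast (by linarith : (n : ℝ) ≤ #A + #B + 1)
  have := card_union_add_card_inter A B
  have := card_le_univ (A ∪ B)
  rw [card_compl, Fintype.card_fin]
  simp only [Fintype.card_fin] at this
  lia

theorem lt_eIn_and_lt_eBetween_compl_of_not_graphExtremal {n : ℕ} {α : ℝ}
    {G : SimpleGraph (Fin n)} (hG : ¬ GraphExtremal α G) {A : Finset (Fin n)} (hA : IsHalfSet A) :
    α * n ^ 2 < eIn G A ∧ α * n ^ 2 < eBetween G A (↑A)ᶜ := by
  simp only [GraphExtremal, not_exists, not_and, not_le] at hG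
  simpa only [Nat.cast_min, lt_min_iff] using hG A hA

-- `m = e(A, B)`, `x = |A ∩ B|`, `p = |A \ B|`, `e = e(A ∩ B)`, `N = n`.
theorem div_three_mul_sq_le_of_bounds {α N m x p e : ℝ} (hα : 0 < α) (hα1 : α < 1)
    (hN : 2000 ≤ α * N) (hx : 0 ≤ x) (hxN : x ≤ N) (hp : 0 ≤ p) (he_le : e ≤ m)
    (he_sq : 2 * e ≤ x ^ 2) (hP : 2 * (α * N ^ 2 - m) ≤ p ^ 2) (hA : x + p ≤ (N + 1) / 2)
    (hCut : α * N ^ 2 ≤ m + (N + 1) / 2 * (x + 1))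
    (hDeg : x * ((1 / 2 - α / 2000) * N) ≤ m + e + x * (x + 1)) :
    α / 3 * N ^ 2 ≤ m := by
  by_contra! hm
  have hN0 : 0 < N := by nlinarith
  have hδN : 2 ≤ α / 1000 * N := by linarith
  have hA' : x + p ≤ N / 2 + α / 1000 * N := by linarith
  have hCut' : α * N ^ 2 ≤ m + x * N / 2 + α / 1000 * N ^ 2 := by nlinarith
  have hDeg' : x * (N / 2 - x) ≤ m + e + α / 1000 * N ^ 2 := by nlinarith
  have hmp : 4 * m ≤ p ^ 2 := by linarith
  -- Small `x` contradicts `hCut'` (which needs `x ≳ 4αN/3`) and `hDeg'` with `e ≤ x²/2`;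
  -- medium `x` contradicts `hDeg'` with `e ≤ x²/2` and `4m ≤ p² ≤ (N/2 - x)²`;
  -- large `x` makes `hDeg'` with `e ≤ m ≤ p²/4` and `p ≲ N/2 - x` force `p = O(αN)`, against `hP`.
  rcases le_or_gt x (N / 8) with hx8 | hx8
  · nlinarith [mul_nonneg hx (by linarith : (0:ℝ) ≤ N / 8 - x)]
  rcases le_or_gt x (N / 4) with hx4 | hx4
  · have : p ^ 2 ≤ (N / 2 - x + α / 1000 * N) ^ 2 := pow_le_pow_left₀ hp (by linarith) 2
    nlinarith [mul_nonneg (by linarith : (0:ℝ) ≤ x - N / 8) (by linarith : (0:ℝ) ≤ N / 4 - x)]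
  have hp_sq : 4 * α * N ^ 2 / 3 < p ^ 2 := by linarith
  have hp_lb : α / 1000 * N ≤ p := by
    by_contra! hlt
    have := pow_lt_pow_left₀ hlt hp two_ne_zero
    nlinarith
  have h1 : N / 4 * (p - α / 1000 * N) ≤ x * (N / 2 - x) :=
    calc N / 4 * (p - α / 1000 * N) ≤ N / 4 * (N / 2 - x) :=
          mul_le_mul_of_nonneg_left (by linarith) (by positivity)
      _ ≤ x * (N / 2 - x) := by gcongr; linarith
  have h2 : p ^ 2 ≤ p * (N / 4 + α / 1000 * N) := by
    rw [sq]; gcongr; linarith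
  have h3 : p * N * (1 / 8 - α / 2000) ≤ 5 * (α / 1000) * N ^ 2 / 4 := by
    linarith only [h1, h2, hDeg', he_le, hmp]
  have hp_ub : p ≤ 11 * (α / 1000) * N := by nlinarith
  have := pow_le_pow_left₀ hp hp_ub 2
  nlinarith

theorem le_eBetween_of_not_graphExtremal {n : ℕ} {α : ℝ} (hα : 0 < α) (hα1 : α < 1)
    (hn : 2000 ≤ α * n) {G : SimpleGraph (Fin n)} (hG : ¬ GraphExtremal α G)
    (hdeg : ∀ v, (1 / 2 - α / 2000) * (n : ℝ) ≤ ((G.neighborSet v).ncard : ℝ))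
    {A B : Finset (Fin n)} (hA : IsHalfSet A) (hB : IsHalfSet B) :
    α / 3 * (n : ℝ) ^ 2 ≤ eBetween G A B := by
  obtain ⟨hInA, hCutA⟩ := lt_eIn_and_lt_eBetween_compl_of_not_graphExtremal hG hA
  have hR : (#(A ∪ B)ᶜ : ℝ) ≤ #(A ∩ B) + 1 := by exact_mod_cast hA.card_compl_union_le hB
  refine div_three_mul_sq_le_of_bounds hα hα1 hn (x := #(A ∩ B)) (p := #(A \ B))
    (e := eIn G ↑(A ∩ B)) (by positivity)
    (by exact_mod_cast (card_le_univ _).trans_eq (Fintype.card_fin n)) (by positivity)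
    (by exact_mod_cast eIn_inter_le_eBetween G A B)
    (by exact_mod_cast two_mul_eIn_le_sq G (A ∩ B)) ?_ ?_ ?_ ?_
  · have h1 : (eIn G A : ℝ) ≤ eBetween G A B + eIn G ↑(A \ B) := by
      exact_mod_cast eIn_le_eBetween_add_eIn_diff G A B
    have h2 : 2 * (eIn G ↑(A \ B) : ℝ) ≤ (#(A \ B) : ℝ) ^ 2 := by
      exact_mod_cast two_mul_eIn_le_sq G (A \ B)
    linarith
  · have : (#(A ∩ B) : ℝ) + #(A \ B) = #A := by exact_mod_cast card_inter_add_card_sdiff A B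
    linarith [hA.2]
  · have h1 : (eBetween G A (A : Set (Fin n))ᶜ : ℝ) ≤ eBetween G A B + #A * #(A ∪ B)ᶜ := by
      exact_mod_cast eBetween_compl_le_add_card_mul G A B
    have h2 : (#A : ℝ) * #(A ∪ B)ᶜ ≤ (n + 1) / 2 * (#(A ∩ B) + 1) :=
      mul_le_mul hA.2 hR (by positivity) (by linarith [hA.1])
    linarith
  · have h1 : #(A ∩ B) * ((1 / 2 - α / 2000) * n) ≤
        ∑ v ∈ A ∩ B, ((G.neighborSet v).ncard : ℝ) := by
      simpa using card_nsmul_le_sum _ _ _ fun v _ => hdeg v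
    have h2 : ∑ v ∈ A ∩ B, ((G.neighborSet v).ncard : ℝ) ≤
        eBetween G A B + eIn G ↑(A ∩ B) + #(A ∩ B) * #(A ∪ B)ᶜ := by
      exact_mod_cast sum_ncard_neighborSet_inter_le G A B
    have h3 : (#(A ∩ B) : ℝ) * #(A ∪ B)ᶜ ≤ #(A ∩ B) * (#(A ∩ B) + 1) :=
      mul_le_mul_of_nonneg_left hR (by positivity)
    linarith

/-- For every `α ∈ (0,1)` there are `ε > 0` and `n₀` such that for all
`n ≥ n₀`: if `G` is a non-`α`-extremal graph on `n` vertices of minimum degree at least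
`(1/2 - ε)n`, then `e(A, B) ≥ (α/3)n²` for every pair of half-sets `A`, `B`. -/
theorem edges_between_halfsets :
    ∀ α : ℝ, 0 < α → α < 1 → ∃ ε : ℝ, 0 < ε ∧ ∃ n₀ : ℕ, ∀ n : ℕ, n₀ ≤ n →
      ∀ G : SimpleGraph (Fin n),
        ¬ GraphExtremal α G →
        (∀ v, (1 / 2 - ε) * (n : ℝ) ≤ ((G.neighborSet v).ncard : ℝ)) →
        ∀ A B : Finset (Fin n), IsHalfSet A → IsHalfSet B →
          α / 3 * (n : ℝ) ^ 2 ≤ ((eBetween G ↑A ↑B : ℕ) : ℝ) := by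
  intro α hα hα1
  refine ⟨α / 2000, by positivity, ⌈2000 / α⌉₊, fun n hn G hG hdeg A B hA hB => ?_⟩
  have hn' : 2000 ≤ α * n := by
    have := (Nat.le_ceil (2000 / α)).trans (Nat.cast_le.mpr hn)
    rwa [div_le_iff₀ hα, mul_comm] at this
  exact le_eBetween_of_not_graphExtremal hα hα1 hn' hG hdeg hA hB

end RobustDirac
end

section
/- For every α ∈ (0,1) there is an n₀ such that for all n ≥ n₀ the following holds. Let G be an edge-minimal Dirac graph on n vertices and let A be a half-set of its vertex set with e_G(A) ≤ αn². Then e_G(Ā) ≤ 3αn², where Ā denotes the complement of A. -/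
/-!
In an edge-minimal Dirac graph every edge has an endpoint of degree less than `n/2 + 1`, since
deleting it must push one of its endpoints below `n/2`. Hence the low-degree vertices `S` of `Ā`
cover all edges inside `Ā`, and `e(Ā) ≤ ∑_{x ∈ S} d_Ā(x)`. As `|A| ≥ (n-1)/2`, a low-degree
vertex `x` has `d_Ā(x) ≤ 3/2 + (|A| - d_A(x))`: its neighbours in `Ā` are paid for by its
non-neighbours in `A`. But `A` is sparse and all degrees are at least `n/2`, so almost all pairs
between `A` and `Ā` are edges: there are at most `2 e(A) + (n+1)/4` non-adjacent ones. Altogether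
`e(Ā) ≤ 2 e(A) + n + 1`, and `n + 1 ≤ α n²` once `n ≥ 2/α`.
-/

open Finset
open scoped Classical

namespace RobustDirac

/-- An edge-minimal Dirac graph: removing any edge destroys the Dirac property. -/
def IsEdgeMinimalDirac {n : ℕ} (G : SimpleGraph (Fin n)) : Prop :=
  IsDirac G ∧ ∀ e ∈ G.edgeSet, ¬ IsDirac (G.deleteEdges {e})


section DegreeIn

variable {V : Type*} (G : SimpleGraph V)

noncomputable def degreeIn (A : Finset V) (v : V) : ℕ :=
  #{u ∈ A | G.Adj v u}

variable {G}

lemma degreeIn_le_card (A : Finset V) (v : V) : degreeIn G A v ≤ #A :=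
  card_filter_le _ _

lemma degreeIn_mono {A B : Finset V} (h : A ⊆ B) (v : V) : degreeIn G A v ≤ degreeIn G B v :=
  card_le_card (filter_subset_filter _ h)

lemma sum_degreeIn_comm (P Q : Finset V) :
    ∑ x ∈ P, degreeIn G Q x = ∑ y ∈ Q, degreeIn G P y := by
  convert sum_card_bipartiteAbove_eq_sum_card_bipartiteBelow G.Adj using 3 <;>
    simp only [degreeIn, bipartiteAbove, bipartiteBelow, G.adj_comm]

variable [Fintype V]

lemma degreeIn_add_degreeIn_compl [DecidableEq V] (A : Finset V) (v : V) :
    degreeIn G A v + degreeIn G Aᶜ v = G.degree v := by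
  rw [degreeIn, degreeIn, ← card_union_of_disjoint (disjoint_filter_filter disjoint_compl_right),
    ← filter_union, union_compl, ← G.card_neighborFinset_eq_degree, G.neighborFinset_eq_filter]

lemma two_mul_eIn (A : Finset V) : 2 * eIn G ↑A = ∑ v ∈ A, degreeIn G A v := by
  have hedges : eIn G ↑A = #(G.induce ↑A).edgeFinset := by
    rw [← G.card_filter_edgeFinset_toFinset_subset, eIn, ← Set.ncard_coe_finset]
    congr 1
    ext e
    simp [subset_iff]
  have hdeg : ∀ v : ↑(↑A : Set V), (G.induce ↑A).degree v = degreeIn G A v := by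
    intro v
    have h := congrArg card (G.map_neighborFinset_induce v)
    rw [card_map, SimpleGraph.card_neighborFinset_eq_degree] at h
    convert h using 1
    · congr!
    · rw [degreeIn, Finset.toFinset_coe, G.neighborFinset_eq_filter, filter_inter, univ_inter]
  rw [hedges, ← SimpleGraph.sum_degrees_eq_twice_card_edges]
  simp only [hdeg]
  exact sum_coe_sort A (degreeIn G A)

end DegreeIn

section Counting

variable {V : Type*} [Fintype V] {G : SimpleGraph V}

lemma sum_degree_eq_two_mul_eIn_add [DecidableEq V] (A : Finset V) :
    ∑ v ∈ A, G.degree v = 2 * eIn G ↑A + ∑ v ∈ A, degreeIn G Aᶜ v := by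
  simp only [← degreeIn_add_degreeIn_compl A, sum_add_distrib, two_mul_eIn]

lemma eIn_le_sum_degreeIn_of_cover (B : Finset V) (p : V → Prop)
    (hcover : ∀ x ∈ B, ∀ y ∈ B, G.Adj x y → p x ∨ p y) :
    eIn G ↑B ≤ ∑ x ∈ B with p x, degreeIn G B x := by
  have hrest : ∑ x ∈ B with ¬p x, degreeIn G B x ≤ ∑ y ∈ B with p y, degreeIn G B y :=
    calc ∑ x ∈ B with ¬p x, degreeIn G B x
        = ∑ x ∈ B with ¬p x, degreeIn G {y ∈ B | p y} x := by
          refine sum_congr rfl fun x hx => congrArg card ?_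
          ext y
          simp only [mem_filter] at hx ⊢
          have := hcover x hx.1 y
          tauto
      _ = ∑ y ∈ B with p y, degreeIn G {x ∈ B | ¬p x} y := sum_degreeIn_comm _ _
      _ ≤ ∑ y ∈ B with p y, degreeIn G B y :=
          sum_le_sum fun y _ => degreeIn_mono (filter_subset _ _) y
  have := two_mul_eIn (G := G) B
  rw [← sum_filter_add_sum_filter_not B p] at this
  omega

end Counting

section DeleteEdge

variable {V : Type*} (G : SimpleGraph V) (u v : V)

lemma ncard_neighborSet_eq_degree [Fintype V] : (G.neighborSet u).ncard = G.degree u := by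
  rw [Set.ncard_eq_toFinset_card', ← SimpleGraph.neighborFinset_def,
    SimpleGraph.card_neighborFinset_eq_degree]

lemma neighborSet_deleteEdges_left :
    (G.deleteEdges {s(u, v)}).neighborSet u = G.neighborSet u \ {v} := by
  ext x
  simp only [SimpleGraph.mem_neighborSet, SimpleGraph.deleteEdges_adj, Set.mem_singleton_iff,
    Set.mem_sdiff, Sym2.eq_iff]
  refine and_congr_right fun hux => ?_
  have := G.ne_of_adj hux
  tauto

lemma neighborSet_deleteEdges_of_ne {w : V} (hu : w ≠ u) (hv : w ≠ v) :
    (G.deleteEdges {s(u, v)}).neighborSet w = G.neighborSet w := by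
  ext x
  simp only [SimpleGraph.mem_neighborSet, SimpleGraph.deleteEdges_adj, Set.mem_singleton_iff,
    Sym2.eq_iff]
  tauto

lemma degree_le_ncard_neighborSet_deleteEdges_add_one [Fintype V] :
    G.degree u ≤ ((G.deleteEdges {s(u, v)}).neighborSet u).ncard + 1 := by
  have := Set.pred_ncard_le_ncard_sdiff_singleton (G.neighborSet u) v
  rw [neighborSet_deleteEdges_left, ← ncard_neighborSet_eq_degree]
  omega

end DeleteEdge

section Dirac

variable {n : ℕ} {G : SimpleGraph (Fin n)}

lemma IsDirac.half_le_degree (hG : IsDirac G) (v : Fin n) : (n : ℝ) / 2 ≤ G.degree v := by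
  simpa only [ncard_neighborSet_eq_degree] using hG v

lemma IsEdgeMinimalDirac.degree_lt_or_degree_lt (hG : IsEdgeMinimalDirac G) {u v : Fin n}
    (huv : G.Adj u v) : (G.degree u : ℝ) < n / 2 + 1 ∨ (G.degree v : ℝ) < n / 2 + 1 := by
  obtain ⟨w, hw⟩ : ∃ w, (((G.deleteEdges {s(u, v)}).neighborSet w).ncard : ℝ) < n / 2 := by
    simpa [IsDirac] using hG.2 _ huv
  have hu : (G.degree u : ℝ) ≤ ((G.deleteEdges {s(u, v)}).neighborSet u).ncard + 1 := by
    exact_mod_cast degree_le_ncard_neighborSet_deleteEdges_add_one G u v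
  have hv : (G.degree v : ℝ) ≤ ((G.deleteEdges {s(u, v)}).neighborSet v).ncard + 1 := by
    rw [Sym2.eq_swap]
    exact_mod_cast degree_le_ncard_neighborSet_deleteEdges_add_one G v u
  rcases eq_or_ne w u with rfl | hwu
  · exact Or.inl (by linarith)
  rcases eq_or_ne w v with rfl | hwv
  · exact Or.inr (by linarith)
  rw [neighborSet_deleteEdges_of_ne G u v hwu hwv, ncard_neighborSet_eq_degree] at hw
  exact absurd (hG.1.half_le_degree w) (not_le.mpr hw)

lemma IsEdgeMinimalDirac.eIn_compl_le (hG : IsEdgeMinimalDirac G) {A : Finset (Fin n)}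
    (hA : IsHalfSet A) : (eIn G (↑A)ᶜ : ℝ) ≤ 2 * eIn G ↑A + n + 1 := by
  rw [← coe_compl]
  set B := Aᶜ
  set S := {x ∈ B | (G.degree x : ℝ) < n / 2 + 1}
  have hcardB : (#B : ℝ) = n - #A := by
    rw [card_compl, Fintype.card_fin, Nat.cast_sub]
    simpa using A.card_le_univ
  have hcover : eIn G ↑B ≤ ∑ x ∈ S, degreeIn G B x :=
    eIn_le_sum_degreeIn_of_cover B _ fun _ _ _ _ huv => hG.degree_lt_or_degree_lt huv
  have hsmall : ∀ x ∈ S, (degreeIn G B x : ℝ) ≤ 3 / 2 + (#A - degreeIn G A x) := by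
    intro x hx
    have hsplit : (degreeIn G A x + degreeIn G B x : ℝ) = G.degree x := by
      exact_mod_cast degreeIn_add_degreeIn_compl A x
    linarith [(mem_filter.mp hx).2, hA.1]
  have hmissing : ∀ x ∈ B, (0 : ℝ) ≤ #A - degreeIn G A x := fun x _ =>
    sub_nonneg.mpr (by exact_mod_cast degreeIn_le_card A x)
  have hcross : (#A : ℝ) * (n / 2) ≤ 2 * eIn G ↑A + ∑ x ∈ B, (degreeIn G A x : ℝ) := by
    have hsum := sum_degree_eq_two_mul_eIn_add (G := G) A
    rw [sum_degreeIn_comm] at hsum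
    calc (#A : ℝ) * (n / 2) = ∑ v ∈ A, (n / 2 : ℝ) := by rw [sum_const, nsmul_eq_mul]
      _ ≤ ∑ v ∈ A, (G.degree v : ℝ) := sum_le_sum fun v _ => hG.1.half_le_degree v
      _ = _ := by exact_mod_cast hsum
  calc (eIn G ↑B : ℝ)
      ≤ ∑ x ∈ S, (degreeIn G B x : ℝ) := by exact_mod_cast hcover
    _ ≤ ∑ x ∈ S, (3 / 2 + (#A - degreeIn G A x : ℝ)) := sum_le_sum hsmall
    _ ≤ ∑ x ∈ B, (3 / 2 + (#A - degreeIn G A x : ℝ)) :=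
        sum_le_sum_of_subset_of_nonneg (filter_subset _ _)
          fun x hx _ => by linarith [hmissing x hx]
    _ = 3 / 2 * #B + #A * #B - ∑ x ∈ B, (degreeIn G A x : ℝ) := by
        rw [sum_add_distrib, sum_sub_distrib, sum_const, sum_const]
        simp only [nsmul_eq_mul]
        ring
    _ ≤ 2 * eIn G ↑A + n + 1 := by
        rw [hcardB]
        nlinarith [hA.1, hA.2]

end Dirac

/-- For every `α ∈ (0,1)` there is `n₀` such that for all `n ≥ n₀`: if `G`
is an edge-minimal Dirac graph on `n` vertices and `A` a half-set with `e(A) ≤ αn²`, then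
`e(Ā) ≤ 3αn²`. -/
theorem complement_also_sparse :
    ∀ α : ℝ, 0 < α → α < 1 → ∃ n₀ : ℕ, ∀ n : ℕ, n₀ ≤ n →
      ∀ G : SimpleGraph (Fin n), IsEdgeMinimalDirac G →
        ∀ A : Finset (Fin n), IsHalfSet A →
          ((eIn G ↑A : ℕ) : ℝ) ≤ α * (n : ℝ) ^ 2 →
          ((eIn G (↑A)ᶜ : ℕ) : ℝ) ≤ 3 * α * (n : ℝ) ^ 2 := by
  intro α hα _
  refine ⟨⌈2 / α⌉₊, fun n hn G hG A hA hsparse => ?_⟩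
  have hαn : 2 ≤ α * n := by
    rw [← div_le_iff₀' hα]
    exact Nat.ceil_le.mp hn
  have hlinear : (n : ℝ) + 1 ≤ α * n ^ 2 := by nlinarith
  linarith [hG.eIn_compl_le hA]

end RobustDirac
end
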